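/- arXiv:1306.3716 — 4 statements merged into one kernel-verified Lean document; each statement's English description precedes it below -/
import Mathlib

section
/- Let K = 𝔽_q(T) with q = p^t, and let c ∈ K satisfy v_Q(c) ≥ 0 for every place Q of K except possibly the place P associated to a monic irreducible polynomial P(T). Suppose f, g ∈ 𝔽_q[T] are coprime to P, α ∈ ℕ with gcd(α, p) = 1, and g/P^α = j·f/P^α + (c^p − c) for some j ∈ {1,…,p−1}. Then either c = 0, or v_P(c) ≥ −⌊α/p⌋; equivalently c = h(T)/P^{α₀} for some polynomial h with deg h ≤ α₀·deg P, where α₀ = ⌊α/p⌋. -/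
open IsDedekindDomain Polynomial WithZero

/-! If `c` has a pole at `P`, the ultrametric inequality gives `v_P(c^p - c) = p·v_P(c)`, while the
hypothesis writes `c^p - c` as a polynomial over `P^α`; hence `p·(-v_P(c)) ≤ α`. Then `c·P^α₀` is
integral at every finite place, so it is a polynomial `h`, and `v_∞(c) ≥ 0` bounds `deg h` by
`deg P^α₀`. -/

namespace WithZero

theorem le_exp_div_of_pow_le {x : ℤᵐ⁰} {n : ℕ} {a : ℤ} (hn : 0 < n) (h : x ^ n ≤ exp a) :
    x ≤ exp (a / n) := by
  rcases eq_or_ne x 0 with rfl | hx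
  · simp
  rw [← exp_log hx, ← exp_nsmul, exp_le_exp, nsmul_eq_mul] at h
  rw [← exp_log hx, exp_le_exp, Int.le_ediv_iff_mul_le (by exact_mod_cast hn), mul_comm]
  exact h

end WithZero

namespace Valuation

variable {K Γ₀ : Type*} [Field K] [LinearOrderedCommGroupWithZero Γ₀]

theorem map_pow_sub_self_of_one_lt (v : Valuation K Γ₀) {c : K} {n : ℕ} (hn : 1 < n)
    (hc : 1 < v c) : v (c ^ n - c) = v c ^ n := by
  rw [v.map_sub_eq_of_lt_left (by rw [map_pow]; exact lt_self_pow₀ hc hn), map_pow]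

theorem le_exp_div_of_map_pow_sub_self_le (v : Valuation K ℤᵐ⁰) {c : K} {n a : ℕ} (hn : 1 < n)
    (h : v (c ^ n - c) ≤ exp (a : ℤ)) : v c ≤ exp ((a / n : ℕ) : ℤ) := by
  rcases le_or_gt (v c) 1 with hc | hc
  · exact hc.trans (by rw [← exp_zero, exp_le_exp]; positivity)
  rw [v.map_pow_sub_self_of_one_lt hn hc] at h
  exact_mod_cast le_exp_div_of_pow_le (by omega) h

end Valuation

namespace IsDedekindDomain.HeightOneSpectrum

theorem ne_zero_of_asIdeal_eq_span {R : Type*} [CommRing R] (v : HeightOneSpectrum R) {π : R}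
    (hv : v.asIdeal = Ideal.span {π}) : π ≠ 0 := by
  rintro rfl
  exact v.ne_bot (by rw [hv, Ideal.span_singleton_eq_bot])

variable {R K : Type*} [CommRing R] [IsDedekindDomain R] [Field K] [Algebra R K]
  [IsFractionRing R K] (v : HeightOneSpectrum R) {π : R}

theorem valuation_pow_of_asIdeal_eq_span (hv : v.asIdeal = Ideal.span {π}) (k : ℕ) :
    v.valuation K (algebraMap R K (π ^ k)) = exp (-(k : ℤ)) := by
  rw [valuation_of_algebraMap, map_pow,
    v.intValuation_singleton (v.ne_zero_of_asIdeal_eq_span hv) hv, ← exp_nsmul]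
  simp

theorem valuation_div_pow_le (hv : v.asIdeal = Ideal.span {π}) (r : R) (k : ℕ) :
    v.valuation K (algebraMap R K r / algebraMap R K (π ^ k)) ≤ exp (k : ℤ) := by
  rw [map_div₀, v.valuation_pow_of_asIdeal_eq_span hv, exp_neg, div_inv_eq_mul]
  exact mul_le_of_le_one_left' (v.valuation_le_one r)

theorem exists_eq_div_pow_of_valuation_le (hv : v.asIdeal = Ideal.span {π}) {c : K}
    (hfin : ∀ Q : HeightOneSpectrum R, Q ≠ v → Q.valuation K c ≤ 1) {k : ℕ}
    (hk : v.valuation K c ≤ exp (k : ℤ)) :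
    ∃ h : R, c = algebraMap R K h / algebraMap R K (π ^ k) := by
  have hπ : algebraMap R K (π ^ k) ≠ 0 := by
    simpa using pow_ne_zero k (v.ne_zero_of_asIdeal_eq_span hv)
  obtain ⟨h, hh⟩ := mem_integers_of_valuation_le_one K (c * algebraMap R K (π ^ k)) fun Q => by
    rw [map_mul]
    rcases eq_or_ne Q v with hQ | hQ
    · rw [hQ, v.valuation_pow_of_asIdeal_eq_span hv, exp_neg]
      exact mul_inv_le_one_of_le₀ hk zero_le
    · exact mul_le_one' (hfin Q hQ) (Q.valuation_le_one _)
  exact ⟨h, by rw [hh, mul_div_cancel_right₀ _ hπ]⟩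

end IsDedekindDomain.HeightOneSpectrum

namespace RatFunc

variable {F : Type*} [Field F] [DecidableEq (RatFunc F)]

theorem degree_le_of_inftyValuation_div_le_one {h q : F[X]} (hq : q ≠ 0)
    (hle : inftyValuation F (algebraMap F[X] (RatFunc F) h / algebraMap F[X] (RatFunc F) q) ≤ 1) :
    h.degree ≤ q.natDegree := by
  rcases eq_or_ne h 0 with rfl | h0
  · simp
  rw [map_div₀, inftyValuation_apply, inftyValuation_apply, inftyValuation.polynomial _ h0,
    inftyValuation.polynomial _ hq, div_le_one₀ (by simp), exp_le_exp, Nat.cast_le] at hle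
  exact degree_le_of_natDegree_le hle

end RatFunc

theorem stmt3_general {p : ℕ} (hp : p.Prime)
    (Fq : Type*) [Field Fq]
    (P : Polynomial Fq)
    (v : HeightOneSpectrum (Polynomial Fq)) (hv : v.asIdeal = Ideal.span {P})
    (c : RatFunc Fq)
    (hfin : ∀ Q : HeightOneSpectrum (Polynomial Fq), Q ≠ v → Q.valuation (RatFunc Fq) c ≤ 1)
    (hinf : @FunctionField.inftyValuation Fq _ (Classical.decEq _) c ≤ 1)
    (f g : Polynomial Fq)
    (α : ℕ) (j : ℕ)
    (heq : algebraMap (Polynomial Fq) (RatFunc Fq) g /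
        algebraMap (Polynomial Fq) (RatFunc Fq) (P ^ α) =
      (j : RatFunc Fq) * (algebraMap (Polynomial Fq) (RatFunc Fq) f /
        algebraMap (Polynomial Fq) (RatFunc Fq) (P ^ α)) + (c ^ p - c)) :
    (c = 0 ∨ v.valuation (RatFunc Fq) c ≤
        ((Multiplicative.ofAdd ((α / p : ℕ) : ℤ) : Multiplicative ℤ) :
          WithZero (Multiplicative ℤ))) ∧
      ∃ h : Polynomial Fq, h.degree ≤ (P.natDegree * (α / p) : ℕ) ∧
        c = algebraMap (Polynomial Fq) (RatFunc Fq) h /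
          algebraMap (Polynomial Fq) (RatFunc Fq) (P ^ (α / p)) := by
  classical
  have hartin_schreier : c ^ p - c = algebraMap (Polynomial Fq) (RatFunc Fq) (g - j * f) /
      algebraMap (Polynomial Fq) (RatFunc Fq) (P ^ α) := by
    rw [map_sub, map_mul, map_natCast, sub_div, mul_div_assoc, heq]
    ring
  have hval : v.valuation (RatFunc Fq) c ≤ exp ((α / p : ℕ) : ℤ) :=
    (v.valuation (RatFunc Fq)).le_exp_div_of_map_pow_sub_self_le hp.one_lt
      (hartin_schreier ▸ v.valuation_div_pow_le hv _ α)
  obtain ⟨h, rfl⟩ := v.exists_eq_div_pow_of_valuation_le hv hfin hval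
  refine ⟨Or.inr hval, h, ?_, rfl⟩
  rw [mul_comm, ← natDegree_pow]
  exact RatFunc.degree_le_of_inftyValuation_div_le_one
    (pow_ne_zero _ (v.ne_zero_of_asIdeal_eq_span hv)) hinf

/-- Let `K = 𝔽_q(T)`, `q = p^t`, and let `c ∈ K` satisfy
`v_Q(c) ≥ 0` for every place `Q` of `K` (including the infinite place) except
possibly the place associated to the monic irreducible polynomial `P`.  Suppose
`f, g ∈ 𝔽_q[T]` are coprime to `P`, `α ∈ ℕ` with `p ∤ α`, and
`g / P ^ α = j • (f / P ^ α) + (c ^ p - c)` for some `j ∈ {1, …, p - 1}`.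
Then either `c = 0`, or `v_P(c) ≥ -⌊α / p⌋`; equivalently `c = h / P ^ α₀` for
some polynomial `h` with `deg h ≤ α₀ ⬝ deg P`, where `α₀ = ⌊α / p⌋`.
(Valuations are written multiplicatively: `v_Q(c) ≥ n` additively corresponds
to `Q.valuation c ≤ ofAdd (-n)` with values in `ℤₘ₀`.) -/
theorem stmt3 {p t : ℕ} (hp : p.Prime) (ht : 0 < t)
    (Fq : Type*) [Field Fq] [Fintype Fq] (hq : Fintype.card Fq = p ^ t)
    (P : Polynomial Fq) (hPmonic : P.Monic) (hPirr : Irreducible P)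
    (v : HeightOneSpectrum (Polynomial Fq)) (hv : v.asIdeal = Ideal.span {P})
    (c : RatFunc Fq)
    (hfin : ∀ Q : HeightOneSpectrum (Polynomial Fq), Q ≠ v → Q.valuation (RatFunc Fq) c ≤ 1)
    (hinf : @FunctionField.inftyValuation Fq _ (Classical.decEq _) c ≤ 1)
    (f g : Polynomial Fq) (hf : IsCoprime f P) (hg : IsCoprime g P)
    (α : ℕ) (hα : ¬ p ∣ α) (j : ℕ) (hj1 : 1 ≤ j) (hj2 : j ≤ p - 1)
    (heq : algebraMap (Polynomial Fq) (RatFunc Fq) g /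
        algebraMap (Polynomial Fq) (RatFunc Fq) (P ^ α) =
      (j : RatFunc Fq) * (algebraMap (Polynomial Fq) (RatFunc Fq) f /
        algebraMap (Polynomial Fq) (RatFunc Fq) (P ^ α)) + (c ^ p - c)) :
    (c = 0 ∨ v.valuation (RatFunc Fq) c ≤
        ((Multiplicative.ofAdd ((α / p : ℕ) : ℤ) : Multiplicative ℤ) :
          WithZero (Multiplicative ℤ))) ∧
      ∃ h : Polynomial Fq, h.degree ≤ (P.natDegree * (α / p) : ℕ) ∧
        c = algebraMap (Polynomial Fq) (RatFunc Fq) h /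
          algebraMap (Polynomial Fq) (RatFunc Fq) (P ^ (α / p)) :=
  stmt3_general hp Fq P v hv c hfin hinf f g α j heq
end

section
/- Let q = p^t, P ∈ 𝔽_q[T] a monic irreducible polynomial of degree d, and β ≥ 2. The number of elements of order exactly p in the unit group (𝔽_q[T]/(P^β))^× is q^{(β − ⌈β/p⌉)d} − 1. -/
/-!
Write `c = ⌈β/p⌉` and `R = 𝔽_q[T]/(P^β)`. Since `p = 0` in `R`, Frobenius is additive, so
`x ↦ x - 1` is a bijection from the units of order `p` onto the nonzero `z` with `z^p = 0`.
As `P` is prime, `P^β ∣ f^p` exactly when `P^c ∣ f`, so these `z` (together with `0`) form the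
ideal `(P^c)/(P^β)`, which multiplication by `P^c` identifies with `𝔽_q[T]/(P^(β-c))`, a
vector space of dimension `(β - c) d` over `𝔽_q`.
-/

open Polynomial Pointwise

section Frobenius

variable {R : Type*} [CommRing R] {p : ℕ}

lemma add_pow_prime_of_natCast_eq_zero (hp : p.Prime) (hR : (p : R) = 0) (x y : R) :
    (x + y) ^ p = x ^ p + y ^ p := by
  obtain ⟨r, hr⟩ := exists_add_pow_prime_eq hp x y
  simpa [hR] using hr

noncomputable def unitsOrderOfEqPrimeEquiv (hp : p.Prime) (hR : (p : R) = 0) :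
    {x : Rˣ // orderOf x = p} ≃ {z : R // z ≠ 0 ∧ z ^ p = 0} where
  toFun x := ⟨(x.1 : R) - 1, by
    obtain ⟨x, hx⟩ := x
    refine ⟨fun h => hp.ne_one ?_, ?_⟩
    · rw [← hx, orderOf_eq_one_iff, Units.ext_iff, Units.val_one, ← sub_eq_zero, h]
    · have h1 := add_pow_prime_of_natCast_eq_zero hp hR ((x : R) - 1) 1
      rw [sub_add_cancel, ← Units.val_pow_eq_pow_val, ← hx, pow_orderOf_eq_one, one_pow,
        Units.val_one, hx] at h1
      exact add_eq_right.mp h1.symm⟩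
  invFun z := ⟨(IsNilpotent.isUnit_one_add ⟨p, z.2.2⟩).unit, by
    have := Fact.mk hp
    refine orderOf_eq_prime ?_ ?_
    · rw [Units.ext_iff, Units.val_pow_eq_pow_val, IsUnit.unit_spec, add_comm,
        add_pow_prime_of_natCast_eq_zero hp hR, z.2.2, zero_add, one_pow, Units.val_one]
    · rw [Ne, Units.ext_iff, IsUnit.unit_spec, Units.val_one, add_eq_left]
      exact z.2.1⟩
  left_inv x := by ext; simp
  right_inv z := by ext; simp

lemma natCard_subtype_ne_zero_and {M : Type*} [Zero M] {Q : M → Prop} (hQ : Q 0) :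
    Nat.card {z : M // z ≠ 0 ∧ Q z} = Nat.card {z : M // Q z} - 1 := by
  refine Eq.trans ?_ (Set.ncard_sdiff_singleton_of_mem (s := {z | Q z}) hQ)
  exact Nat.card_congr (Equiv.subtypeEquivRight fun z => by simp [and_comm])

lemma natCard_units_orderOf_eq_prime (hp : p.Prime) (hR : (p : R) = 0) :
    Nat.card {x : Rˣ // orderOf x = p} = Nat.card {z : R // z ^ p = 0} - 1 := by
  rw [Nat.card_congr (unitsOrderOfEqPrimeEquiv hp hR),
    natCard_subtype_ne_zero_and (Q := (· ^ p = 0)) (zero_pow hp.ne_zero)]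

end Frobenius

lemma Prime.pow_dvd_pow_iff_pow_ceilDiv_dvd {α : Type*} [CommMonoidWithZero α]
    [IsCancelMulZero α] [WfDvdMonoid α] {P f : α} (hP : Prime P) {p : ℕ} (hp : 0 < p)
    (β : ℕ) : P ^ β ∣ f ^ p ↔ P ^ (β ⌈/⌉ p) ∣ f := by
  rcases eq_or_ne f 0 with rfl | hf
  · simp [zero_pow hp.ne']
  have hfin := FiniteMultiplicity.of_prime_left hP hf
  rw [pow_dvd_iff_le_emultiplicity, emultiplicity_pow hP, pow_dvd_iff_le_emultiplicity,
    hfin.emultiplicity_eq_multiplicity]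
  norm_cast
  exact (ceilDiv_le_iff_le_mul hp).symm

lemma natCard_pow_eq_zero_quotient_span_prime_pow {A : Type*} [CommRing A] [IsDomain A]
    [WfDvdMonoid A] {P : A} (hP : Prime P) {p : ℕ} (hp : 0 < p) (β : ℕ) :
    Nat.card {z : A ⧸ Ideal.span {P ^ β} // z ^ p = 0} =
      Nat.card (A ⧸ Ideal.span {P ^ (β - β ⌈/⌉ p)}) := by
  set c := β ⌈/⌉ p
  have hcβ : c ≤ β := (ceilDiv_le_iff_le_mul hp).2 (Nat.le_mul_of_pos_left β hp)
  have hI : Ideal.span {P ^ β} = P ^ c • Ideal.span {P ^ (β - c)} := by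
    rw [← Submodule.ideal_span_singleton_smul, Ideal.smul_eq_mul,
      Ideal.span_singleton_mul_span_singleton, ← pow_add, Nat.add_sub_cancel' hcβ]
  have hPc : P ^ c ∈ nonZeroDivisors A :=
    mem_nonZeroDivisors_of_ne_zero (pow_ne_zero c hP.ne_zero)
  rw [hI, ← Nat.card_range_of_injective (Ideal.mulQuot_injective _ hPc)]
  refine Nat.card_congr (Equiv.subtypeEquivRight fun z => ?_)
  obtain ⟨f, rfl⟩ := Ideal.Quotient.mk_surjective z
  rw [← Ideal.exact_mulQuot_quotOfMul, ← map_pow, Ideal.Quotient.eq_zero_iff_mem]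
  calc f ^ p ∈ P ^ c • Ideal.span {P ^ (β - c)} ↔ P ^ c ∣ f := by
        rw [← hI, Ideal.mem_span_singleton, hP.pow_dvd_pow_iff_pow_ceilDiv_dvd hp]
    _ ↔ _ := Ideal.mem_span_singleton.symm.trans Ideal.Quotient.eq_zero_iff_mem.symm

lemma natCast_eq_zero_of_card_eq_pow {K : Type*} [Field K] [Fintype K] {p t : ℕ}
    (hq : Fintype.card K = p ^ t) : (p : K) = 0 := by
  have h := FiniteField.cast_card_eq_zero K
  rw [hq, Nat.cast_pow] at h
  exact eq_zero_of_pow_eq_zero h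

lemma Polynomial.natCard_quotient_span_singleton {K : Type*} [Field K] {f : K[X]} (hf : f ≠ 0) :
    Nat.card (K[X] ⧸ Ideal.span {f}) = Nat.card K ^ f.natDegree := by
  have : Module.Finite K (K[X] ⧸ Ideal.span {f}) := (AdjoinRoot.powerBasis hf).finite
  rw [Module.natCard_eq_pow_finrank (K := K), finrank_quotient_span_eq_natDegree]

theorem stmt5_general {p t : ℕ} (hp : p.Prime)
    (Fq : Type*) [Field Fq] [Fintype Fq] (hq : Fintype.card Fq = p ^ t)
    (P : Polynomial Fq) (hPirr : Irreducible P)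
    (β : ℕ) :
    Nat.card {x : (Polynomial Fq ⧸ Ideal.span {P ^ β})ˣ // orderOf x = p} =
      Fintype.card Fq ^ ((β - (β + p - 1) / p) * P.natDegree) - 1 := by
  have hpR : (p : Polynomial Fq ⧸ Ideal.span {P ^ β}) = 0 := by
    rw [← map_natCast (algebraMap Fq _), natCast_eq_zero_of_card_eq_pow hq, map_zero]
  rw [natCard_units_orderOf_eq_prime hp hpR,
    natCard_pow_eq_zero_quotient_span_prime_pow hPirr.prime hp.pos,
    Polynomial.natCard_quotient_span_singleton (pow_ne_zero _ hPirr.ne_zero), natDegree_pow,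
    Nat.card_eq_fintype_card, Nat.ceilDiv_eq_add_pred_div]

/-- Let `q = p^t`, `P ∈ 𝔽_q[T]` a monic irreducible polynomial of
degree `d`, and `β ≥ 2`.  The number of elements of order exactly `p` in the unit
group `(𝔽_q[T]/(P^β))^×` is `q ^ ((β - ⌈β/p⌉) * d) - 1`, where `⌈β/p⌉ = (β + p - 1)/p`
is the ceiling of `β/p`. -/
theorem stmt5 {p t : ℕ} (hp : p.Prime) (ht : 0 < t)
    (Fq : Type*) [Field Fq] [Fintype Fq] (hq : Fintype.card Fq = p ^ t)
    (P : Polynomial Fq) (hPmonic : P.Monic) (hPirr : Irreducible P)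
    (β : ℕ) (hβ : 2 ≤ β) :
    Nat.card {x : (Polynomial Fq ⧸ Ideal.span {P ^ β})ˣ // orderOf x = p} =
      Fintype.card Fq ^ ((β - (β + p - 1) / p) * P.natDegree) - 1 :=
  stmt5_general hp Fq hq P hPirr β
end

section
/- Let q = p^t, P ∈ 𝔽_q[T] monic irreducible of degree d, and β ≥ 1. An element 1 + h(T)·P mod P^β (with h ≠ 0) of (𝔽_q[T]/(P^β))^× has order p if and only if P^{⌈β/p⌉ − 1} divides h(T); in particular (1 + hP)^p = 1 + h^p P^p in 𝔽_q[T]. -/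
open Polynomial

/-!
In characteristic `p` the Frobenius identity gives `(1 + hP)^p = 1 + (hP)^p`, so `1 + hP` has order
dividing `p` modulo `P^β` exactly when `P^β ∣ (hP)^p`. Since `P` is prime, this is the case iff
`P^⌈β/p⌉ ∣ hP`, i.e. iff `P^(⌈β/p⌉ - 1) ∣ h`. The degree bound on `h` rules out `P^β ∣ hP`, so
`1 + hP` is not the identity and its order is then exactly `p`.
-/

theorem Ideal.Quotient.mk_span_singleton_one_add_eq_one_iff {R : Type*} [CommRing R] {a b : R} :
    Ideal.Quotient.mk (Ideal.span {a}) (1 + b) = 1 ↔ a ∣ b := by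
  rw [← map_one (Ideal.Quotient.mk _), Ideal.Quotient.eq, add_sub_cancel_left,
    Ideal.mem_span_singleton]

section CommMonoidWithZero

variable {α : Type*} [CommMonoidWithZero α] [IsCancelMulZero α] {π a : α}

theorem pow_succ_dvd_mul_self_iff (hπ : π ≠ 0) (k : ℕ) : π ^ (k + 1) ∣ a * π ↔ π ^ k ∣ a := by
  rw [pow_succ]
  exact mul_dvd_mul_iff_right hπ

theorem Prime.pow_dvd_pow_iff_pow_ceil_div_dvd (hπ : Prime π) {k : ℕ} (hk : 0 < k) (β : ℕ) :
    π ^ β ∣ a ^ k ↔ π ^ ((β + k - 1) / k) ∣ a := by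
  rw [pow_dvd_iff_le_emultiplicity, pow_dvd_iff_le_emultiplicity, emultiplicity_pow hπ]
  cases emultiplicity π a with
  | top => simp [hk.ne']
  | coe m =>
    norm_cast
    rw [Nat.div_le_iff_le_mul_add_pred hk]
    omega

end CommMonoidWithZero

theorem Polynomial.not_pow_dvd_of_natDegree_lt {R : Type*} [CommRing R] [IsDomain R]
    {P h : R[X]} (hh : h ≠ 0) {n : ℕ} (hdeg : h.natDegree < n * P.natDegree) : ¬P ^ n ∣ h := by
  intro hdvd
  have := natDegree_le_of_dvd hdvd hh
  rw [natDegree_pow] at this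
  omega

theorem stmt8_general {p t : ℕ} (hp : p.Prime)
    (Fq : Type*) [Field Fq] [Fintype Fq] (hq : Fintype.card Fq = p ^ t)
    (P : Polynomial Fq) (hPirr : Irreducible P)
    (β : ℕ)
    (h : Polynomial Fq) (hh0 : h ≠ 0)
    (hdeg : h.degree < (((β - 1) * P.natDegree : ℕ) : WithBot ℕ)) :
    (orderOf (Ideal.Quotient.mk (Ideal.span {P ^ β}) (1 + h * P)) = p ↔
        P ^ ((β + p - 1) / p - 1) ∣ h) ∧
      (1 + h * P) ^ p = 1 + h ^ p * P ^ p := by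
  have := Fact.mk hp
  have := charP_of_card_eq_prime_pow hq
  have hfrob : (1 + h * P) ^ p = 1 + (h * P) ^ p := by rw [add_pow_char, one_pow]
  refine ⟨?_, by rw [hfrob, mul_pow]⟩
  have hP0 : P ≠ 0 := hPirr.ne_zero
  replace hdeg := (natDegree_lt_iff_degree_lt hh0).2 hdeg
  obtain ⟨m, rfl⟩ : ∃ m, β = m + 1 := Nat.exists_eq_add_one.2 <| Nat.pos_of_ne_zero <| by
    rintro rfl
    simp at hdeg
  obtain ⟨c, hc⟩ : ∃ c, (m + 1 + p - 1) / p = c + 1 :=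
    Nat.exists_eq_add_one.2 <| (Nat.le_div_iff_mul_le hp.pos).2 (by omega)
  have hx1 : Ideal.Quotient.mk (Ideal.span {P ^ (m + 1)}) (1 + h * P) ≠ 1 := by
    rw [Ne, Ideal.Quotient.mk_span_singleton_one_add_eq_one_iff, pow_succ_dvd_mul_self_iff hP0]
    exact not_pow_dvd_of_natDegree_lt hh0 (by simpa using hdeg)
  rw [orderOf_eq_prime_iff, ← map_pow, hfrob, Ideal.Quotient.mk_span_singleton_one_add_eq_one_iff,
    and_iff_left hx1, Prime.pow_dvd_pow_iff_pow_ceil_div_dvd hPirr.prime hp.pos, hc,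
    pow_succ_dvd_mul_self_iff hP0, Nat.add_sub_cancel]

/-- Let `q = p^t`, `P ∈ 𝔽_q[T]` monic irreducible of degree `d`,
`β ≥ 1`, and `h ∈ 𝔽_q[T]` with `h ≠ 0` and `deg h ≤ (β-1)d - 1`
(encoded as `deg h < (β-1)d`).  The element `1 + h·P mod P^β` of
`(𝔽_q[T]/(P^β))^×` has order `p` if and only if `P^{⌈β/p⌉ - 1}` divides `h`;
in particular `(1 + hP)^p = 1 + h^p P^p` in `𝔽_q[T]`.
Here `⌈β/p⌉ = (β + p - 1)/p`. -/
theorem stmt8 {p t : ℕ} (hp : p.Prime) (ht : 0 < t)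
    (Fq : Type*) [Field Fq] [Fintype Fq] (hq : Fintype.card Fq = p ^ t)
    (P : Polynomial Fq) (hPmonic : P.Monic) (hPirr : Irreducible P)
    (β : ℕ) (hβ : 1 ≤ β)
    (h : Polynomial Fq) (hh0 : h ≠ 0)
    (hdeg : h.degree < (((β - 1) * P.natDegree : ℕ) : WithBot ℕ)) :
    (orderOf (Ideal.Quotient.mk (Ideal.span {P ^ β}) (1 + h * P)) = p ↔
        P ^ ((β + p - 1) / p - 1) ∣ h) ∧
      (1 + h * P) ^ p = 1 + h ^ p * P ^ p :=
  stmt8_general hp Fq hq P hPirr β h hh0 hdeg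
end

section
/- Let q = p^t and let 𝔽_{q^p}/𝔽_q be the degree-p extension of finite fields. Let F/K be a degree-p extension of K = 𝔽_q(T) with field of constants 𝔽_q, and ξ ∈ 𝔽_{q^p} \ 𝔽_q. If E, F are two distinct such degree-p Artin–Schreier extensions of K contained in a common field M with constant field 𝔽_q, then for any i, j ∈ {1,…,p−1} the fields E_j and F_i obtained by adjoining z + jξ and y + iξ (where E = K(z), F = K(y)) are distinct. -/
/-!
If `K(z + jξ) = K(y + iξ) =: L`, then `L` contains `v = i z - j y`, which satisfies
`v ^ p - v ∈ K` and is not in `K` because `K(z) ≠ K(y)`. Such a `v` has degree exactly `p`,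
while `[L : K] ≤ p`, so `L = K(v) ⊆ K(z, y) ⊆ M` and hence `ξ ∈ M`. But `ξ` is algebraic
over `𝔽_q` and `ξ ∉ 𝔽_q`, which contradicts `𝔽_q` being the constant field of `M`.
-/

set_option synthInstance.maxHeartbeats 1000000
open Polynomial IntermediateField

theorem natDegree_X_pow_sub_X_sub_C {R : Type*} [Field R] {n : ℕ} (hn : 1 < n) (c : R) :
    (X ^ n - X - C c : R[X]).natDegree = n := by
  rw [natDegree_sub_C, FiniteField.X_pow_card_sub_X_natDegree_eq _ hn]

theorem nsmul_mem_iff_of_not_dvd {K Ω : Type*} [Field K] [Field Ω] [Algebra K Ω] {p : ℕ}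
    [CharP Ω p] (L : IntermediateField K Ω) {n : ℕ} (hn : ¬ p ∣ n) {x : Ω} :
    n • x ∈ L ↔ x ∈ L := by
  refine ⟨fun h ↦ ?_, fun h ↦ nsmul_mem h n⟩
  have hn0 : (n : Ω) ≠ 0 := fun h0 ↦ hn ((CharP.cast_eq_zero_iff Ω p n).1 h0)
  have hx : x = (n : Ω)⁻¹ * n • x := by rw [nsmul_eq_mul, inv_mul_cancel_left₀ hn0]
  exact hx ▸ mul_mem (inv_mem (L.natCast_mem n)) h

theorem nsmul_sub_nsmul_notMem_bot {K Ω : Type*} [Field K] [Field Ω] [Algebra K Ω] {p : ℕ}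
    [CharP Ω p] {z y : Ω} (hzy : K⟮z⟯ ≠ K⟮y⟯) {i j : ℕ} (hi : ¬ p ∣ i) (hj : ¬ p ∣ j) :
    i • z - j • y ∉ (⊥ : IntermediateField K Ω) := by
  intro hc
  apply hzy
  apply le_antisymm <;> rw [adjoin_simple_le_iff]
  · rw [← nsmul_mem_iff_of_not_dvd _ hi, ← sub_add_cancel (i • z) (j • y)]
    exact add_mem ((bot_le : ⊥ ≤ K⟮y⟯) hc) (nsmul_mem (mem_adjoin_simple_self K y) j)
  · rw [← nsmul_mem_iff_of_not_dvd _ hj, ← sub_sub_self (i • z) (j • y)]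
    exact sub_mem (nsmul_mem (mem_adjoin_simple_self K z) i) ((bot_le : ⊥ ≤ K⟮z⟯) hc)

section ArtinSchreier

variable {K Ω : Type*} [Field K] [Field Ω] [Algebra K Ω] {p : ℕ} [Fact p.Prime] [CharP Ω p]

variable (K Ω p) in
/-- `℘⁻¹(K)` for the Artin–Schreier map `℘ x = x ^ p - x` of `Ω`. -/
def artinSchreierSubgroup : AddSubgroup Ω :=
  (algebraMap K Ω).range.toAddSubgroup.comap
    ((frobenius Ω p).toAddMonoidHom - AddMonoidHom.id Ω)

theorem mem_artinSchreierSubgroup {x : Ω} :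
    x ∈ artinSchreierSubgroup K Ω p ↔ ∃ c : K, x ^ p - x = algebraMap K Ω c := by
  simp [artinSchreierSubgroup, frobenius_def, eq_comm]

theorem exists_aeval_eq_zero_of_mem_artinSchreierSubgroup {w : Ω}
    (hw : w ∈ artinSchreierSubgroup K Ω p) :
    ∃ f : K[X], f.natDegree = p ∧ aeval w f = 0 := by
  obtain ⟨c, hc⟩ := mem_artinSchreierSubgroup.1 hw
  exact ⟨X ^ p - X - C c, natDegree_X_pow_sub_X_sub_C (Fact.out : p.Prime).one_lt c,
    by simp [hc]⟩

theorem isIntegral_of_mem_artinSchreierSubgroup {w : Ω}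
    (hw : w ∈ artinSchreierSubgroup K Ω p) : IsIntegral K w := by
  obtain ⟨f, hf, hfw⟩ := exists_aeval_eq_zero_of_mem_artinSchreierSubgroup hw
  exact IsAlgebraic.isIntegral ⟨f, ne_zero_of_natDegree_gt (hf ▸ (Fact.out : p.Prime).pos), hfw⟩

theorem natDegree_minpoly_le_of_mem_artinSchreierSubgroup {w : Ω}
    (hw : w ∈ artinSchreierSubgroup K Ω p) : (minpoly K w).natDegree ≤ p := by
  obtain ⟨f, hf, hfw⟩ := exists_aeval_eq_zero_of_mem_artinSchreierSubgroup hw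
  exact hf ▸ natDegree_le_of_dvd (minpoly.dvd K w hfw)
    (ne_zero_of_natDegree_gt (hf ▸ (Fact.out : p.Prime).pos))

theorem sub_mem_bot_of_pow_sub_self_eq {r w : Ω} (h : r ^ p - r = w ^ p - w) :
    r - w ∈ (⊥ : Subfield Ω) := by
  rw [Subfield.mem_bot_iff_pow_eq_self Ω p, sub_pow_char]
  linear_combination h

/-- The roots of `minpoly K w` are `w + k` with `k ∈ 𝔽_p ⊆ K`, so their sum
`-nextCoeff ∈ K` is `deg • w` modulo `K`. -/
theorem natDegree_minpoly_nsmul_mem_bot [IsAlgClosed Ω] {w : Ω}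
    (hw : w ∈ artinSchreierSubgroup K Ω p) :
    (minpoly K w).natDegree • w ∈ (⊥ : IntermediateField K Ω) := by
  set g := minpoly K w
  have hg : g.Monic := minpoly.monic (isIntegral_of_mem_artinSchreierSubgroup hw)
  have hsplit : (g.map (algebraMap K Ω)).Splits := IsAlgClosed.splits _
  have hroot : ∀ r ∈ g.aroots Ω, r - w ∈ (⊥ : IntermediateField K Ω) := by
    intro r hr
    obtain ⟨c, hc⟩ := mem_artinSchreierSubgroup.1 hw
    have hrc : aeval r (X ^ p - X - C c) = 0 :=
      aeval_eq_zero_of_dvd_aeval_eq_zero (minpoly.dvd K w (by simp [hc])) (mem_aroots.1 hr).2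
    simp only [map_sub, map_pow, aeval_X, aeval_C, sub_eq_zero] at hrc
    exact bot_le (a := (⊥ : IntermediateField K Ω).toSubfield)
      (sub_mem_bot_of_pow_sub_self_eq (hrc.trans hc.symm))
  have hsum : (g.aroots Ω).sum ∈ (⊥ : IntermediateField K Ω) := by
    rw [← neg_neg (g.aroots Ω).sum, ← hsplit.nextCoeff_eq_neg_sum_roots_of_monic (hg.map _),
      nextCoeff_map (algebraMap K Ω).injective]
    exact neg_mem (IntermediateField.algebraMap_mem _ _)
  have hcard : Multiset.card (g.aroots Ω) = g.natDegree := by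
    rw [splits_iff_card_roots.1 hsplit, natDegree_map]
  have hdecomp : g.natDegree • w = (g.aroots Ω).sum - ((g.aroots Ω).map (· - w)).sum := by
    rw [Multiset.sum_map_sub, Multiset.map_id', Multiset.map_const', Multiset.sum_replicate,
      hcard, sub_sub_cancel]
  rw [hdecomp]
  exact sub_mem hsum
    (IntermediateField.multiset_sum_mem _ _ (Multiset.forall_mem_map_iff.2 hroot))

theorem natDegree_minpoly_of_mem_artinSchreierSubgroup [IsAlgClosed Ω] {w : Ω}
    (hw : w ∈ artinSchreierSubgroup K Ω p) (hwK : w ∉ (⊥ : IntermediateField K Ω)) :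
    (minpoly K w).natDegree = p := by
  refine (natDegree_minpoly_le_of_mem_artinSchreierSubgroup hw).antisymm (not_lt.1 fun hlt ↦ ?_)
  have hpos := minpoly.natDegree_pos (isIntegral_of_mem_artinSchreierSubgroup hw)
  exact hwK ((nsmul_mem_iff_of_not_dvd _ (Nat.not_dvd_of_pos_of_lt hpos hlt)).1
    (natDegree_minpoly_nsmul_mem_bot hw))

theorem adjoin_simple_eq_of_mem_adjoin_simple [IsAlgClosed Ω] {v w : Ω}
    (hv : v ∈ artinSchreierSubgroup K Ω p) (hw : w ∈ artinSchreierSubgroup K Ω p)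
    (hvK : v ∉ (⊥ : IntermediateField K Ω)) (hvw : v ∈ K⟮w⟯) : K⟮v⟯ = K⟮w⟯ := by
  have hwint := isIntegral_of_mem_artinSchreierSubgroup hw
  have := adjoin.finiteDimensional hwint
  refine eq_of_le_of_finrank_le (adjoin_simple_le_iff.2 hvw) ?_
  rw [adjoin.finrank hwint, adjoin.finrank (isIntegral_of_mem_artinSchreierSubgroup hv),
    natDegree_minpoly_of_mem_artinSchreierSubgroup hv hvK]
  exact natDegree_minpoly_le_of_mem_artinSchreierSubgroup hw

theorem mem_adjoin_pair_of_adjoin_add_nsmul_eq [IsAlgClosed Ω] {z y ξ : Ω}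
    (hz : z ∈ artinSchreierSubgroup K Ω p) (hy : y ∈ artinSchreierSubgroup K Ω p)
    (hξ : ξ ∈ artinSchreierSubgroup K Ω p) (hzy : K⟮z⟯ ≠ K⟮y⟯) {i j : ℕ} (hi : ¬ p ∣ i)
    (hj : ¬ p ∣ j) (h : K⟮z + j • ξ⟯ = K⟮y + i • ξ⟯) : ξ ∈ K⟮z, y⟯ := by
  set w := z + j • ξ
  have hw : w ∈ artinSchreierSubgroup K Ω p := add_mem hz (nsmul_mem hξ j)
  have hv : i • z - j • y = i • w - j • (y + i • ξ) := by
    simp only [w, smul_add, smul_comm i j ξ]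
    abel
  have hvw : i • z - j • y ∈ K⟮w⟯ := hv ▸ sub_mem (nsmul_mem (mem_adjoin_simple_self K w) i)
    (nsmul_mem (h ▸ mem_adjoin_simple_self K _) j)
  have hKv : K⟮i • z - j • y⟯ = K⟮w⟯ := adjoin_simple_eq_of_mem_adjoin_simple
    (sub_mem (nsmul_mem hz i) (nsmul_mem hy j)) hw (nsmul_sub_nsmul_notMem_bot hzy hi hj) hvw
  have hz_mem : z ∈ K⟮z, y⟯ := subset_adjoin K _ (Set.mem_insert z {y})
  have hy_mem : y ∈ K⟮z, y⟯ := subset_adjoin K _ (Set.mem_insert_of_mem z rfl)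
  have hw_mem : w ∈ K⟮z, y⟯ :=
    adjoin_simple_le_iff.2 (sub_mem (nsmul_mem hz_mem i) (nsmul_mem hy_mem j))
      (hKv ▸ mem_adjoin_simple_self K w)
  rw [← nsmul_mem_iff_of_not_dvd _ hj, ← add_sub_cancel_left z (j • ξ)]
  exact sub_mem hw_mem hz_mem

end ArtinSchreier

theorem stmt17_general {p t : ℕ} (hp : p.Prime)
    (Fq : Type*) [Field Fq] [Fintype Fq] (hq : Fintype.card Fq = p ^ t)
    (ρ : Fq) (hρ : ∀ c : Fq, c ^ p - c ≠ ρ)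
    (ξ : AlgebraicClosure (RatFunc Fq))
    (hξ : ξ ^ p - ξ = algebraMap Fq (AlgebraicClosure (RatFunc Fq)) ρ)
    (M E F : IntermediateField (RatFunc Fq) (AlgebraicClosure (RatFunc Fq)))
    (hEM : E ≤ M) (hFM : F ≤ M)
    (hMconst : ∀ x : AlgebraicClosure (RatFunc Fq), x ∈ M → IsIntegral Fq x →
      ∃ c : Fq, x = algebraMap Fq (AlgebraicClosure (RatFunc Fq)) c)
    (z y : AlgebraicClosure (RatFunc Fq))
    (hzE : E = IntermediateField.adjoin (RatFunc Fq) {z})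
    (hyF : F = IntermediateField.adjoin (RatFunc Fq) {y})
    (hzAS : ∃ a : RatFunc Fq,
      z ^ p - z = algebraMap (RatFunc Fq) (AlgebraicClosure (RatFunc Fq)) a)
    (hyAS : ∃ a : RatFunc Fq,
      y ^ p - y = algebraMap (RatFunc Fq) (AlgebraicClosure (RatFunc Fq)) a)
    (hEF : E ≠ F) :
    ∀ i j : ℕ, 1 ≤ i → i ≤ p - 1 → 1 ≤ j → j ≤ p - 1 →
      IntermediateField.adjoin (RatFunc Fq)
          ({z + (j : AlgebraicClosure (RatFunc Fq)) * ξ} :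
            Set (AlgebraicClosure (RatFunc Fq))) ≠
        IntermediateField.adjoin (RatFunc Fq)
          ({y + (i : AlgebraicClosure (RatFunc Fq)) * ξ} :
            Set (AlgebraicClosure (RatFunc Fq))) := by
  intro i j hi hip hj hjp heq
  have := Fact.mk hp
  have := charP_of_card_eq_prime_pow hq
  have : CharP (AlgebraicClosure (RatFunc Fq)) p :=
    charP_of_injective_algebraMap (algebraMap Fq _).injective p
  have hξK : ξ ∈ artinSchreierSubgroup (RatFunc Fq) _ p := mem_artinSchreierSubgroup.2
    ⟨algebraMap Fq _ ρ, by rw [← IsScalarTower.algebraMap_apply]; exact hξ⟩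
  rw [← nsmul_eq_mul, ← nsmul_eq_mul] at heq
  have hξzy := mem_adjoin_pair_of_adjoin_add_nsmul_eq (mem_artinSchreierSubgroup.2 hzAS)
    (mem_artinSchreierSubgroup.2 hyAS) hξK (hzE ▸ hyF ▸ hEF)
    (Nat.not_dvd_of_pos_of_lt hi (by omega)) (Nat.not_dvd_of_pos_of_lt hj (by omega)) heq
  have hzyM : (RatFunc Fq)⟮z, y⟯ ≤ M := adjoin_le_iff.2 <| Set.insert_subset_iff.2
    ⟨hEM (hzE ▸ mem_adjoin_simple_self _ z), Set.singleton_subset_iff.2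
      (hFM (hyF ▸ mem_adjoin_simple_self _ y))⟩
  obtain ⟨c, hc⟩ := hMconst ξ (hzyM hξzy)
    (isIntegral_of_mem_artinSchreierSubgroup (mem_artinSchreierSubgroup.2 ⟨ρ, hξ⟩))
  exact hρ c <| (algebraMap Fq (AlgebraicClosure (RatFunc Fq))).injective <| by
    rw [map_sub, map_pow, ← hc, hξ]

/-- Let `q = p^t` and let `ξ` be an Artin–Schreier generator of
`𝔽_{q^p}` over `𝔽_q` (so `ξ^p - ξ = ρ` with `ρ ∈ 𝔽_q \ ℘(𝔽_q)`), viewed inside a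
fixed algebraic closure `Ω` of `K = 𝔽_q(T)`.  Let `E = K(z)` and `F = K(y)` be two
distinct degree-`p` Artin–Schreier extensions of `K`, each with exact constant
field `𝔽_q`, both contained in a field `M` whose constant field is `𝔽_q`.  Then
for any `i, j ∈ {1, …, p-1}` the fields `E_j = K(z + jξ)` and `F_i = K(y + iξ)`
are distinct.  (The constant field of an intermediate field being `𝔽_q` is
expressed as: every element of it that is integral over `𝔽_q` lies in `𝔽_q`.) -/
theorem stmt17 {p t : ℕ} (hp : p.Prime) (ht : 0 < t)
    (Fq : Type*) [Field Fq] [Fintype Fq] (hq : Fintype.card Fq = p ^ t)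
    (ρ : Fq) (hρ : ∀ c : Fq, c ^ p - c ≠ ρ)
    (ξ : AlgebraicClosure (RatFunc Fq))
    (hξ : ξ ^ p - ξ = algebraMap Fq (AlgebraicClosure (RatFunc Fq)) ρ)
    (M E F : IntermediateField (RatFunc Fq) (AlgebraicClosure (RatFunc Fq)))
    (hEM : E ≤ M) (hFM : F ≤ M)
    (hMconst : ∀ x : AlgebraicClosure (RatFunc Fq), x ∈ M → IsIntegral Fq x →
      ∃ c : Fq, x = algebraMap Fq (AlgebraicClosure (RatFunc Fq)) c)
    (hEconst : ∀ x : AlgebraicClosure (RatFunc Fq), x ∈ E → IsIntegral Fq x →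
      ∃ c : Fq, x = algebraMap Fq (AlgebraicClosure (RatFunc Fq)) c)
    (hFconst : ∀ x : AlgebraicClosure (RatFunc Fq), x ∈ F → IsIntegral Fq x →
      ∃ c : Fq, x = algebraMap Fq (AlgebraicClosure (RatFunc Fq)) c)
    (z y : AlgebraicClosure (RatFunc Fq))
    (hzE : E = IntermediateField.adjoin (RatFunc Fq) {z})
    (hyF : F = IntermediateField.adjoin (RatFunc Fq) {y})
    (hzAS : ∃ a : RatFunc Fq,
      z ^ p - z = algebraMap (RatFunc Fq) (AlgebraicClosure (RatFunc Fq)) a)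
    (hyAS : ∃ a : RatFunc Fq,
      y ^ p - y = algebraMap (RatFunc Fq) (AlgebraicClosure (RatFunc Fq)) a)
    (hEdeg : Module.finrank (RatFunc Fq) E = p)
    (hFdeg : Module.finrank (RatFunc Fq) F = p)
    (hEF : E ≠ F) :
    ∀ i j : ℕ, 1 ≤ i → i ≤ p - 1 → 1 ≤ j → j ≤ p - 1 →
      IntermediateField.adjoin (RatFunc Fq)
          ({z + (j : AlgebraicClosure (RatFunc Fq)) * ξ} :
            Set (AlgebraicClosure (RatFunc Fq))) ≠
        IntermediateField.adjoin (RatFunc Fq)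
          ({y + (i : AlgebraicClosure (RatFunc Fq)) * ξ} :
            Set (AlgebraicClosure (RatFunc Fq))) :=
  stmt17_general hp Fq hq ρ hρ ξ hξ M E F hEM hFM hMconst z y hzE hyF hzAS hyAS hEF
end
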